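/- arXiv:2206.14865 — 3 statements merged into one kernel-verified Lean document; each statement's English description precedes it below -/
import Mathlib

section
/- Let t > 0 be a real number and let x, y, z be real numbers satisfying the system 2x - t^2 y z = 0, 2y - t^2 x z = 0, 2z - t^2 x y = 0. Then either x = y = z = 0, or x = y = z = 2/t^2, or exactly two of x, y, z equal -2/t^2 and the remaining one equals 2/t^2. -/
/-- Algebraic core of the proof that twistor spaces are never locally
conformally flat. -/
theorem stmt0 (t x y z : ℝ) (ht : 0 < t)
    (h1 : 2 * x - t ^ 2 * y * z = 0)
    (h2 : 2 * y - t ^ 2 * x * z = 0)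
    (h3 : 2 * z - t ^ 2 * x * y = 0) :
    (x = 0 ∧ y = 0 ∧ z = 0) ∨
    (x = 2 / t ^ 2 ∧ y = 2 / t ^ 2 ∧ z = 2 / t ^ 2) ∨
    (x = -2 / t ^ 2 ∧ y = -2 / t ^ 2 ∧ z = 2 / t ^ 2) ∨
    (x = -2 / t ^ 2 ∧ y = 2 / t ^ 2 ∧ z = -2 / t ^ 2) ∨
    (x = 2 / t ^ 2 ∧ y = -2 / t ^ 2 ∧ z = -2 / t ^ 2) := by
  have hs : (t : ℝ) ^ 2 ≠ 0 := pow_ne_zero 2 ht.ne'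
  have hxy : (x - y) * (2 + t ^ 2 * z) = 0 := by ring_nf; linear_combination h1 - h2
  have hyz : (y - z) * (2 + t ^ 2 * x) = 0 := by ring_nf; linear_combination h2 - h3
  have hxz : (x - z) * (2 + t ^ 2 * y) = 0 := by ring_nf; linear_combination h1 - h3
  rcases mul_eq_zero.1 hxy with hxy' | hz
  · have exy : x = y := by linarith [sub_eq_zero.1 hxy']
    rcases mul_eq_zero.1 hyz with hyz' | hx
    · -- x = y = z
      have eyz : y = z := by linarith [sub_eq_zero.1 hyz']
      have eyz : y = z := eyz
      subst exy; subst eyz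
      have hfac : x * (2 - t ^ 2 * x) = 0 := by linear_combination h1
      rcases mul_eq_zero.1 hfac with h0 | h0
      · exact Or.inl ⟨h0, h0, h0⟩
      · have hx' : x = 2 / t ^ 2 := by field_simp; linarith
        exact Or.inr (Or.inl ⟨hx', hx', hx'⟩)
    · -- 2 + t^2 x = 0
      have hx' : x = -2 / t ^ 2 := by field_simp; linarith
      have hy' : y = -2 / t ^ 2 := exy ▸ hx'
      have hz' : z = 2 / t ^ 2 := by
        field_simp
        nlinarith [h3, hx', hy']
      exact Or.inr (Or.inr (Or.inl ⟨hx', hy', hz'⟩))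
  · -- 2 + t^2 z = 0
    have hz' : z = -2 / t ^ 2 := by field_simp; linarith
    rcases mul_eq_zero.1 hxz with hxz' | hy
    · have exz : x = z := by linarith [sub_eq_zero.1 hxz']
      have hx' : x = -2 / t ^ 2 := exz ▸ hz'
      have hy' : y = 2 / t ^ 2 := by
        field_simp
        nlinarith [h2, hx', hz']
      exact Or.inr (Or.inr (Or.inr (Or.inl ⟨hx', hy', hz'⟩)))
    · have hy' : y = -2 / t ^ 2 := by field_simp; linarith
      have hx' : x = 2 / t ^ 2 := by
        field_simp
        nlinarith [h1, hy', hz']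
      exact Or.inr (Or.inr (Or.inr (Or.inr ⟨hx', hy', hz'⟩)))
end

section
/- Let t > 0 be a real number and let A be a symmetric 3×3 real matrix in diagonal form. Suppose that for every rotation matrix a_+ ∈ SO(3), the conjugated matrix Ã = a_+^{-1} A a_+ satisfies the two equations 2Ã_{12} - 2t^2 Ã_{23} Ã_{13} - t^2 Ã_{12}(Ã_{33} - Ã_{22}) = 0 and 2Ã_{13} - 2t^2 Ã_{23} Ã_{12} - t^2 Ã_{13}(Ã_{33} - Ã_{22}) = 0. Then A is a scalar multiple of the identity matrix. -/
/-!
Write `A = diagonal d`. Conjugating by a rotation `(c, s)` in the `(e₀, e₁)`-plane, the first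
equation becomes `c s (d₁ - d₀) (2 - t² ((d₂ - d₁) + s² (d₁ - d₀))) = 0`. For two rotations with
`c s ≠ 0` and different values of `s²`, the bracket is an affine function of `s²` with slope
`-t² (d₁ - d₀)`, so if `d₁ ≠ d₀` it can vanish at both only when `t = 0`, where it equals `2`.
Hence `d₁ = d₀`; the second equation and rotations in the `(e₀, e₂)`-plane give `d₂ = d₀`.
-/

open Matrix

lemma inv_eq_transpose_of_mem_orthogonalGroup {n R : Type*} [Fintype n] [DecidableEq n]
    [CommRing R] {a : Matrix n n R} (ha : a ∈ orthogonalGroup n R) : a⁻¹ = aᵀ :=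
  inv_eq_left_inv ((mem_orthogonalGroup_iff' n R).1 ha)

def HarmonicityEquations (t : ℝ) (B : Matrix (Fin 3) (Fin 3) ℝ) : Prop :=
  (2 * B 0 1 - 2 * t ^ 2 * B 1 2 * B 0 2 - t ^ 2 * B 0 1 * (B 2 2 - B 1 1) = 0) ∧
    (2 * B 0 2 - 2 * t ^ 2 * B 1 2 * B 0 1 - t ^ 2 * B 0 2 * (B 2 2 - B 1 1) = 0)

lemma eq_zero_of_forall_sq_add_sq_eq_one {t w d : ℝ}
    (h : ∀ c s : ℝ, c ^ 2 + s ^ 2 = 1 → c * s * (d * (2 - t ^ 2 * (w + s ^ 2 * d))) = 0) :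
    d = 0 := by
  have h₁ : d * (2 - t ^ 2 * (w + (4 / 5) ^ 2 * d)) = 0 :=
    (mul_eq_zero.1 (h (3 / 5) (4 / 5) (by norm_num))).resolve_left (by norm_num)
  have h₂ : d * (2 - t ^ 2 * (w + (12 / 13) ^ 2 * d)) = 0 :=
    (mul_eq_zero.1 (h (5 / 13) (12 / 13) (by norm_num))).resolve_left (by norm_num)
  have htd : t * d = 0 := pow_eq_zero_iff two_ne_zero |>.1 <| by
    linear_combination (h₁ - h₂) * (169 * 25 / (144 * 25 - 16 * 169))
  linear_combination h₁ / 2 + (t * w + t * (4 / 5) ^ 2 * d) / 2 * htd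

def rotation01 (c s : ℝ) : Matrix (Fin 3) (Fin 3) ℝ := !![c, -s, 0; s, c, 0; 0, 0, 1]

def rotation02 (c s : ℝ) : Matrix (Fin 3) (Fin 3) ℝ := !![c, 0, -s; 0, 1, 0; s, 0, c]

section

variable {c s : ℝ}

lemma rotation01_mem_specialOrthogonalGroup (hcs : c ^ 2 + s ^ 2 = 1) :
    rotation01 c s ∈ specialOrthogonalGroup (Fin 3) ℝ := by
  refine ⟨(mem_orthogonalGroup_iff (Fin 3) ℝ).2 ?_, ?_⟩
  · ext i j
    fin_cases i <;> fin_cases j <;>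
      simp [rotation01, mul_apply, Fin.sum_univ_three, ← sq, hcs, add_comm (s ^ 2), mul_comm s]
  · simp [rotation01, det_fin_three, ← sq, hcs]

lemma rotation02_mem_specialOrthogonalGroup (hcs : c ^ 2 + s ^ 2 = 1) :
    rotation02 c s ∈ specialOrthogonalGroup (Fin 3) ℝ := by
  refine ⟨(mem_orthogonalGroup_iff (Fin 3) ℝ).2 ?_, ?_⟩
  · ext i j
    fin_cases i <;> fin_cases j <;>
      simp [rotation02, mul_apply, Fin.sum_univ_three, ← sq, hcs, add_comm (s ^ 2), mul_comm s]
  · simp [rotation02, det_fin_three, ← sq, hcs]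

lemma conj_rotation01_diagonal (hcs : c ^ 2 + s ^ 2 = 1) (d : Fin 3 → ℝ) :
    (rotation01 c s)⁻¹ * diagonal d * rotation01 c s =
      !![c ^ 2 * d 0 + s ^ 2 * d 1, c * s * (d 1 - d 0), 0;
        c * s * (d 1 - d 0), s ^ 2 * d 0 + c ^ 2 * d 1, 0;
        0, 0, d 2] := by
  rw [inv_eq_transpose_of_mem_orthogonalGroup (rotation01_mem_specialOrthogonalGroup hcs).1]
  ext i j
  fin_cases i <;> fin_cases j <;> simp [rotation01, mul_apply, Fin.sum_univ_three] <;> ring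

lemma conj_rotation02_diagonal (hcs : c ^ 2 + s ^ 2 = 1) (d : Fin 3 → ℝ) :
    (rotation02 c s)⁻¹ * diagonal d * rotation02 c s =
      !![c ^ 2 * d 0 + s ^ 2 * d 2, 0, c * s * (d 2 - d 0);
        0, d 1, 0;
        c * s * (d 2 - d 0), 0, s ^ 2 * d 0 + c ^ 2 * d 2] := by
  rw [inv_eq_transpose_of_mem_orthogonalGroup (rotation02_mem_specialOrthogonalGroup hcs).1]
  ext i j
  fin_cases i <;> fin_cases j <;> simp [rotation02, mul_apply, Fin.sum_univ_three] <;> ring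

lemma harmonicityEquations_conj_rotation01 {t : ℝ} (hcs : c ^ 2 + s ^ 2 = 1) {d : Fin 3 → ℝ}
    (h : HarmonicityEquations t ((rotation01 c s)⁻¹ * diagonal d * rotation01 c s)) :
    c * s * ((d 1 - d 0) * (2 - t ^ 2 * ((d 2 - d 1) + s ^ 2 * (d 1 - d 0)))) = 0 := by
  have h01 := h.1
  rw [conj_rotation01_diagonal hcs] at h01
  simp only [Fin.isValue, of_apply, cons_val', cons_val_one, cons_val_zero, cons_val_fin_one,
    cons_val, mul_zero, sub_zero] at h01
  linear_combination h01 - t ^ 2 * c * s * (d 1 - d 0) * d 1 * hcs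

lemma harmonicityEquations_conj_rotation02 {t : ℝ} (hcs : c ^ 2 + s ^ 2 = 1) {d : Fin 3 → ℝ}
    (h : HarmonicityEquations t ((rotation02 c s)⁻¹ * diagonal d * rotation02 c s)) :
    c * s * ((d 0 - d 2) * (2 - t ^ 2 * ((d 2 - d 1) + s ^ 2 * (d 0 - d 2)))) = 0 := by
  have h02 := h.2
  rw [conj_rotation02_diagonal hcs] at h02
  simp only [Fin.isValue, of_apply, cons_val', cons_val, cons_val_fin_one, cons_val_zero,
    cons_val_one, mul_zero, sub_zero] at h02
  linear_combination -h02 - t ^ 2 * c * s * (d 2 - d 0) * d 2 * hcs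

end

theorem stmt7_general (t : ℝ) (A : Matrix (Fin 3) (Fin 3) ℝ)
    (hdiag : A.IsDiag)
    (h : ∀ a : Matrix (Fin 3) (Fin 3) ℝ,
      a ∈ Matrix.specialOrthogonalGroup (Fin 3) ℝ →
      (2 * (a⁻¹ * A * a) 0 1
          - 2 * t ^ 2 * (a⁻¹ * A * a) 1 2 * (a⁻¹ * A * a) 0 2
          - t ^ 2 * (a⁻¹ * A * a) 0 1
              * ((a⁻¹ * A * a) 2 2 - (a⁻¹ * A * a) 1 1) = 0) ∧
      (2 * (a⁻¹ * A * a) 0 2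
          - 2 * t ^ 2 * (a⁻¹ * A * a) 1 2 * (a⁻¹ * A * a) 0 1
          - t ^ 2 * (a⁻¹ * A * a) 0 2
              * ((a⁻¹ * A * a) 2 2 - (a⁻¹ * A * a) 1 1) = 0)) :
    ∃ c : ℝ, A = c • (1 : Matrix (Fin 3) (Fin 3) ℝ) := by
  obtain ⟨d, rfl⟩ : ∃ d, A = diagonal d := ⟨A.diag, hdiag.diagonal_diag.symm⟩
  have h10 : d 1 - d 0 = 0 := eq_zero_of_forall_sq_add_sq_eq_one fun c s hcs ↦
    harmonicityEquations_conj_rotation01 hcs (h _ (rotation01_mem_specialOrthogonalGroup hcs))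
  have h02 : d 0 - d 2 = 0 := eq_zero_of_forall_sq_add_sq_eq_one fun c s hcs ↦
    harmonicityEquations_conj_rotation02 hcs (h _ (rotation02_mem_specialOrthogonalGroup hcs))
  refine ⟨d 0, ?_⟩
  rw [smul_one_eq_diagonal]
  congr 1
  funext i
  fin_cases i <;> simp only [Fin.zero_eta, Fin.mk_one, Fin.reduceFinMk] <;> linarith

theorem stmt7 (t : ℝ) (ht : 0 < t) (A : Matrix (Fin 3) (Fin 3) ℝ)
    (hsymm : A.IsSymm) (hdiag : A.IsDiag)
    (h : ∀ a : Matrix (Fin 3) (Fin 3) ℝ,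
      a ∈ Matrix.specialOrthogonalGroup (Fin 3) ℝ →
      (2 * (a⁻¹ * A * a) 0 1
          - 2 * t ^ 2 * (a⁻¹ * A * a) 1 2 * (a⁻¹ * A * a) 0 2
          - t ^ 2 * (a⁻¹ * A * a) 0 1
              * ((a⁻¹ * A * a) 2 2 - (a⁻¹ * A * a) 1 1) = 0) ∧
      (2 * (a⁻¹ * A * a) 0 2
          - 2 * t ^ 2 * (a⁻¹ * A * a) 1 2 * (a⁻¹ * A * a) 0 1
          - t ^ 2 * (a⁻¹ * A * a) 0 2
              * ((a⁻¹ * A * a) 2 2 - (a⁻¹ * A * a) 1 1) = 0)) :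
    ∃ c : ℝ, A = c • (1 : Matrix (Fin 3) (Fin 3) ℝ) :=
  stmt7_general t A hdiag h
end

section
/- Let t > 0 and let A be a symmetric 3×3 real matrix, diagonal, with A_{22} - A_{11} ≠ 0 and A_{33} = (A_{11} + A_{22})/2 + 2/t^2. If additionally the harmonicity equations 2Ã_{12} - 2t^2Ã_{23}Ã_{13} - t^2Ã_{12}(Ã_{33} - Ã_{22}) = 0 hold for Ã = a_+^{-1}Aa_+ with a_+ the rotation by angle π/3 in the (1,2)-plane (rows (1/2, -√3/2, 0), (√3/2, 1/2, 0), (0,0,1)), then A_{11} - A_{22} ∈ {4/t^2, -4/(3t^2)} leads respectively to √3/t^2 = 0 or 5/(3√3 t^2) = 0, a contradiction; hence A_{11} = A_{22}. -/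
open Matrix

theorem stmt17 (t : ℝ) (ht : 0 < t) (A : Matrix (Fin 3) (Fin 3) ℝ)
    (hsymm : A.IsSymm) (hdiag : A.IsDiag)
    (h12 : A 1 1 - A 0 0 ≠ 0)
    (h33 : A 2 2 = (A 0 0 + A 1 1) / 2 + 2 / t ^ 2)
    (hmem : A 0 0 - A 1 1 = 4 / t ^ 2 ∨ A 0 0 - A 1 1 = -(4 / (3 * t ^ 2)))
    (harm :
      let a : Matrix (Fin 3) (Fin 3) ℝ :=
        !![1 / 2, -(Real.sqrt 3 / 2), 0;
           Real.sqrt 3 / 2, 1 / 2, 0;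
           0, 0, 1]
      let Atil := a⁻¹ * A * a
      2 * Atil 0 1 - 2 * t ^ 2 * Atil 1 2 * Atil 0 2
        - t ^ 2 * Atil 0 1 * (Atil 2 2 - Atil 1 1) = 0) :
    False := by
  have hs : Real.sqrt 3 ^ 2 = 3 := Real.sq_sqrt (by norm_num)
  set a : Matrix (Fin 3) (Fin 3) ℝ :=
    !![1 / 2, -(Real.sqrt 3 / 2), 0;
       Real.sqrt 3 / 2, 1 / 2, 0;
       0, 0, 1] with ha
  have hinv : a⁻¹ = aᵀ := by
    apply Matrix.inv_eq_right_inv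
    ext i j
    fin_cases i <;> fin_cases j <;>
      simp [ha, Matrix.mul_apply, Fin.sum_univ_three, Matrix.transpose_apply,
        Matrix.vecHead, Matrix.vecTail] <;>
      nlinarith [hs]
  have h01 : A 0 1 = 0 := hdiag (by decide)
  have h02 : A 0 2 = 0 := hdiag (by decide)
  have h10 : A 1 0 = 0 := hdiag (by decide)
  have h12' : A 1 2 = 0 := hdiag (by decide)
  have h20 : A 2 0 = 0 := hdiag (by decide)
  have h21 : A 2 1 = 0 := hdiag (by decide)
  simp only [hinv] at harm
  have e01 : (aᵀ * A * a) 0 1 = Real.sqrt 3 / 4 * (A 1 1 - A 0 0) := by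
    simp [ha, Matrix.mul_apply, Fin.sum_univ_three, h01, h02, h10, h12', h20, h21,
      Matrix.vecHead, Matrix.vecTail]
    ring
  have e12 : (aᵀ * A * a) 1 2 = 0 := by
    simp [ha, Matrix.mul_apply, Fin.sum_univ_three, h01, h02, h10, h12', h20, h21,
      Matrix.vecHead, Matrix.vecTail]
  have e02 : (aᵀ * A * a) 0 2 = 0 := by
    simp [ha, Matrix.mul_apply, Fin.sum_univ_three, h01, h02, h10, h12', h20, h21,
      Matrix.vecHead, Matrix.vecTail]
  have e22 : (aᵀ * A * a) 2 2 = A 2 2 := by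
    simp [ha, Matrix.mul_apply, Fin.sum_univ_three, h01, h02, h10, h12', h20, h21,
      Matrix.vecHead, Matrix.vecTail]
  have e11 : (aᵀ * A * a) 1 1 = 3 / 4 * A 0 0 + 1 / 4 * A 1 1 := by
    simp [ha, Matrix.mul_apply, Fin.sum_univ_three, h01, h02, h10, h12', h20, h21,
      Matrix.vecHead, Matrix.vecTail]
    linear_combination A 0 0 / 4 * hs
  rw [e01, e12, e02, e22, e11, h33] at harm
  have ht2 : (0:ℝ) < t ^ 2 := by positivity
  have ht2ne : (t:ℝ) ^ 2 ≠ 0 := ne_of_gt ht2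
  have hcalc :
      2 * (Real.sqrt 3 / 4 * (A 1 1 - A 0 0)) - 2 * t ^ 2 * 0 * 0
        - t ^ 2 * (Real.sqrt 3 / 4 * (A 1 1 - A 0 0)) *
          ((A 0 0 + A 1 1) / 2 + 2 / t ^ 2 - (3 / 4 * A 0 0 + 1 / 4 * A 1 1))
      = -(Real.sqrt 3 / 16) * (t ^ 2 * (A 1 1 - A 0 0) ^ 2) := by
    field_simp
    ring
  rw [hcalc] at harm
  have hsne : Real.sqrt 3 ≠ 0 := ne_of_gt (Real.sqrt_pos.mpr (by norm_num))
  have h0 : t ^ 2 * (A 1 1 - A 0 0) ^ 2 = 0 := by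
    rcases mul_eq_zero.mp harm with h | h
    · exact absurd h (by simp [hsne])
    · exact h
  rcases mul_eq_zero.mp h0 with h | h
  · exact ht2ne h
  · exact h12 (pow_eq_zero_iff (n := 2) (by norm_num) |>.mp h)
end
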